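/- Let d ≠ 0, f, ζ ∈ ℝ and let a = (a₁, a₂) ∈ C²([0,2π], ℝ²) be a 2π-periodic solution of the system -d a₁'' = -a₂ - ζ a₁ + (a₁²+a₂²) a₁, -d a₂'' = a₁ - ζ a₂ + (a₁²+a₂²) a₂ - f. Then the L² norm of a over [0,2π] satisfies ‖a‖_{L²} ≤ √(2π) |f|. -/

import Mathlib

/-!
Multiplying the first equation by `-a₂`, the second by `a₁` and adding, the cubic and
the `ζ`-terms cancel and one gets `d (a₁'' a₂ - a₂'' a₁) = |a|² - f a₁`. The left-hand side
is `d` times the derivative of the periodic Wronskian `a₁' a₂ - a₂' a₁`, so it integrates to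
zero over a period: `‖a‖²_{L²} = f ∫ a₁`. Young's inequality `f a₁ ≤ (f² + a₁²) / 2` then
gives `‖a‖²_{L²} ≤ 2π f²`.
-/

open Real intervalIntegral

theorem Function.Periodic.deriv {𝕜 F : Type*} [NontriviallyNormedField 𝕜]
    [NormedAddCommGroup F] [NormedSpace 𝕜 F] {f : 𝕜 → F} {c : 𝕜}
    (hf : Function.Periodic f c) : Function.Periodic (deriv f) c := fun x => by
  rw [← deriv_comp_add_const, hf.funext]

theorem integral_deriv_deriv_mul_sub_eq_zero_of_periodic {u v : ℝ → ℝ} {T : ℝ}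
    (hu : ContDiff ℝ 2 u) (hv : ContDiff ℝ 2 v)
    (hpu : Function.Periodic u T) (hpv : Function.Periodic v T) (a : ℝ) :
    ∫ x in a..a + T, (deriv (deriv u) x * v x - deriv (deriv v) x * u x) = 0 := by
  have hu' : ContDiff ℝ 1 (deriv u) := hu.deriv'
  have hv' : ContDiff ℝ 1 (deriv v) := hv.deriv'
  have hwronskian : ∀ x, HasDerivAt (fun y => deriv u y * v y - deriv v y * u y)
      (deriv (deriv u) x * v x - deriv (deriv v) x * u x) x := fun x => by
    refine (((hu'.differentiable one_ne_zero x).hasDerivAt.mul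
      (hv.differentiable two_ne_zero x).hasDerivAt).sub
      ((hv'.differentiable one_ne_zero x).hasDerivAt.mul
        (hu.differentiable two_ne_zero x).hasDerivAt)).congr_deriv ?_
    ring
  have hcont : Continuous fun x => deriv (deriv u) x * v x - deriv (deriv v) x * u x :=
    ((hu'.continuous_deriv le_rfl).mul hv.continuous).sub
      ((hv'.continuous_deriv le_rfl).mul hu.continuous)
  rw [integral_eq_sub_of_hasDerivAt (fun x _ => hwronskian x) (hcont.intervalIntegrable _ _),
    hpu a, hpv a, hpu.deriv a, hpv.deriv a, sub_self]

theorem integral_sq_add_sq_eq_integral_mul_of_lugiatoLefever {d ζ f T : ℝ} {a1 a2 : ℝ → ℝ}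
    (ha1 : ContDiff ℝ 2 a1) (ha2 : ContDiff ℝ 2 a2)
    (hp1 : Function.Periodic a1 T) (hp2 : Function.Periodic a2 T)
    (heq1 : ∀ x, -d * deriv (deriv a1) x
      = -(a2 x) - ζ * a1 x + (a1 x ^ 2 + a2 x ^ 2) * a1 x)
    (heq2 : ∀ x, -d * deriv (deriv a2) x
      = a1 x - ζ * a2 x + (a1 x ^ 2 + a2 x ^ 2) * a2 x - f) (a : ℝ) :
    ∫ x in a..a + T, (a1 x ^ 2 + a2 x ^ 2) = ∫ x in a..a + T, f * a1 x := by
  have hpointwise : ∀ x, (a1 x ^ 2 + a2 x ^ 2) - f * a1 x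
      = d * (deriv (deriv a1) x * a2 x - deriv (deriv a2) x * a1 x) := fun x => by
    linear_combination a2 x * heq1 x - a1 x * heq2 x
  have hdiff : ∫ x in a..a + T, ((a1 x ^ 2 + a2 x ^ 2) - f * a1 x) = 0 := by
    simp only [hpointwise, integral_const_mul,
      integral_deriv_deriv_mul_sub_eq_zero_of_periodic ha1 ha2 hp1 hp2, mul_zero]
  have hsq : Continuous fun x => a1 x ^ 2 + a2 x ^ 2 :=
    (ha1.continuous.pow 2).add (ha2.continuous.pow 2)
  have hmul : Continuous fun x => f * a1 x := continuous_const.mul ha1.continuous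
  rw [integral_sub (hsq.intervalIntegrable _ _) (hmul.intervalIntegrable _ _)] at hdiff
  exact sub_eq_zero.mp hdiff

theorem integral_sq_add_sq_le_of_le_integral_mul {g h : ℝ → ℝ} {T : ℝ} (c : ℝ) (hT : 0 ≤ T)
    (hg : Continuous g) (hh : Continuous h)
    (hle : ∫ x in 0..T, (g x ^ 2 + h x ^ 2) ≤ ∫ x in 0..T, c * g x) :
    ∫ x in 0..T, (g x ^ 2 + h x ^ 2) ≤ T * c ^ 2 := by
  have hsq : Continuous fun x => g x ^ 2 + h x ^ 2 := (hg.pow 2).add (hh.pow 2)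
  have hyoung : ∫ x in 0..T, c * g x ≤ ∫ x in 0..T, (c ^ 2 / 2 + (g x ^ 2 + h x ^ 2) / 2) :=
    integral_mono_on hT ((continuous_const.mul hg).intervalIntegrable _ _)
      ((continuous_const.add (hsq.div_const 2)).intervalIntegrable _ _)
      fun x _ => by nlinarith [sq_nonneg (c - g x), sq_nonneg (h x)]
  rw [integral_add intervalIntegrable_const ((hsq.div_const 2).intervalIntegrable _ _),
    integral_const, integral_div, smul_eq_mul] at hyoung
  linarith

theorem stmt_0 (d ζ f : ℝ) (a1 a2 : ℝ → ℝ)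
    (ha1 : ContDiff ℝ 2 a1) (ha2 : ContDiff ℝ 2 a2)
    (hp1 : Function.Periodic a1 (2 * π)) (hp2 : Function.Periodic a2 (2 * π))
    (heq1 : ∀ x, -d * deriv (deriv a1) x
      = -(a2 x) - ζ * a1 x + (a1 x ^ 2 + a2 x ^ 2) * a1 x)
    (heq2 : ∀ x, -d * deriv (deriv a2) x
      = a1 x - ζ * a2 x + (a1 x ^ 2 + a2 x ^ 2) * a2 x - f) :
    Real.sqrt (∫ x in (0:ℝ)..(2 * π), (a1 x ^ 2 + a2 x ^ 2))
      ≤ Real.sqrt (2 * π) * |f| := by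
  have hπ : (0 : ℝ) ≤ 2 * π := by positivity
  have henergy :=
    integral_sq_add_sq_eq_integral_mul_of_lugiatoLefever ha1 ha2 hp1 hp2 heq1 heq2 0
  rw [zero_add] at henergy
  have hbound := integral_sq_add_sq_le_of_le_integral_mul f hπ ha1.continuous ha2.continuous
    henergy.le
  calc Real.sqrt (∫ x in (0:ℝ)..(2 * π), (a1 x ^ 2 + a2 x ^ 2))
      ≤ Real.sqrt (2 * π * f ^ 2) := Real.sqrt_le_sqrt hbound
    _ = Real.sqrt (2 * π) * |f| := by rw [Real.sqrt_mul hπ, Real.sqrt_sq_eq_abs]
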